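/- Let g, V be vector spaces, μ ∈ Hom(Λ²g, g), ρ ∈ Hom(g⊗V, V), T ∈ Hom(V, g). Consider the L∞-algebra structure on s⁻¹L' ⊕ h where L' = ⊕ₙ (Hom(Λ^{n+1}g,g) ⊕ Hom(Λⁿg⊗V,V)), h = ⊕ₙ Hom(Λ^{n+1}V, g), with operations l₂(s⁻¹Q, s⁻¹Q') = (−1)^{|Q|} s⁻¹[Q,Q']_NR and l_k(s⁻¹Q, θ₁,…,θ_{k−1}) = P[⋯[Q,θ₁]_NR,⋯,θ_{k−1}]_NR (all other combinations zero). Then ((g,μ), ρ, T) is a relative Rota-Baxter Lie algebra if and only if (s⁻¹(μ+ρ), T) satisfies the Maurer-Cartan equation Σ_{k≥1} (1/k!) l_k((s⁻¹π,T),…,(s⁻¹π,T)) = 0, where π = μ+ρ. Equivalently, [π,π]_NR = 0 and [[π,T]_NR, T]_NR = 0. -/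
import Mathlib


attribute [local instance] Classical.propDecidable

def IsShuffle {n : ℕ} (j : ℕ) (σ : Equiv.Perm (Fin n)) : Prop :=
  ∀ a b : Fin n, a < b → ((b : ℕ) < j ∨ j ≤ (a : ℕ)) → σ a < σ b

noncomputable def nrCirc {W : Type*} [AddCommGroup W] (p q : ℕ)
    (P : (Fin (p+1) → W) → W) (Q : (Fin (q+1) → W) → W) :
    (Fin (p+q+1) → W) → W := fun v =>
  ∑ σ : Equiv.Perm (Fin (p+q+1)),
    if IsShuffle (q+1) σ then
      ((Equiv.Perm.sign σ : ℤˣ) : ℤ) •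
        P (Fin.cons (Q fun i => v (σ (Fin.castLE (by omega) i)))
            (fun i => v (σ (Fin.cast (by omega) (Fin.natAdd (q+1) i)))))
    else 0

noncomputable def nrBracket {W : Type*} [AddCommGroup W] (p q : ℕ)
    (P : (Fin (p+1) → W) → W) (Q : (Fin (q+1) → W) → W) :
    (Fin (p+q+1) → W) → W := fun v =>
  nrCirc p q P Q v - ((-1 : ℤ)^(p*q)) • nrCirc q p Q P (fun i => v (Fin.cast (by omega) i))

def pihat {K g V : Type*} [Field K] [AddCommGroup g] [Module K g]
    [AddCommGroup V] [Module K V]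
    (μ : g →ₗ[K] g →ₗ[K] g) (ρ : g →ₗ[K] Module.End K V) :
    (Fin 2 → g × V) → g × V := fun w =>
  (μ (w 0).1 (w 1).1, ρ (w 0).1 (w 1).2 - ρ (w 1).1 (w 0).2)

def hatT {K g V : Type*} [Field K] [AddCommGroup g] [Module K g]
    [AddCommGroup V] [Module K V] (T : V →ₗ[K] g) :
    (Fin 1 → g × V) → g × V := fun w => (T ((w 0).2), 0)

/-- The lift of `θ ∈ Hom(Λᵏ V, g)` to `C^{k-1}(g⊕V, g⊕V)`. -/
def liftB {K g V : Type*} [Field K] [AddCommGroup g] [Module K g]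
    [AddCommGroup V] [Module K V] {k : ℕ}
    (θ : AlternatingMap K V g (Fin k)) : (Fin k → g × V) → g × V :=
  fun v => (θ (fun i => (v i).2), 0)


def mk3 (f h : Fin 3 → Fin 3) (h1 : ∀ x, h (f x) = x) (h2 : ∀ x, f (h x) = x) :
    Equiv.Perm (Fin 3) := ⟨f, h, h1, h2⟩

def c4 : Equiv.Perm (Fin 3) := mk3 ![1,2,0] ![2,0,1] (by decide) (by decide)
def c5 : Equiv.Perm (Fin 3) := mk3 ![2,0,1] ![1,2,0] (by decide) (by decide)

lemma univ3 : (Finset.univ : Finset (Equiv.Perm (Fin 3))) =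
    {1, Equiv.swap 1 2, c4, Equiv.swap 0 1, Equiv.swap 0 2, c5} := by decide

lemma sh_id : IsShuffle (n := 3) 2 1 := by
  intro a b hab h; revert hab h; fin_cases a <;> fin_cases b <;> decide

lemma sh_s12 : IsShuffle 2 (Equiv.swap (1:Fin 3) 2) := by
  intro a b hab h; revert hab h; fin_cases a <;> fin_cases b <;> decide

lemma sh_c4 : IsShuffle 2 c4 := by
  intro a b hab h; revert hab h; fin_cases a <;> fin_cases b <;> decide

lemma nsh_s01 : ¬ IsShuffle 2 (Equiv.swap (0:Fin 3) 1) :=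
  fun h => by have := h 0 1 (by decide) (Or.inl (by decide)); revert this; decide

lemma nsh_s02 : ¬ IsShuffle 2 (Equiv.swap (0:Fin 3) 2) :=
  fun h => by have := h 0 1 (by decide) (Or.inl (by decide)); revert this; decide

lemma nsh_c5 : ¬ IsShuffle 2 c5 :=
  fun h => by have := h 0 1 (by decide) (Or.inl (by decide)); revert this; decide

lemma arg11 {W : Type*} (Q : (Fin 2 → W) → W) (v : Fin 3 → W)
    (σ : Equiv.Perm (Fin 3)) (h : 1+1 ≤ 1+1+1) (h' : 1+1+1 = 1+1+1) :
    (Fin.cons (Q fun i => v (σ (Fin.castLE h i)))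
        (fun i => v (σ (Fin.cast h' (Fin.natAdd (1+1) i)))) : Fin 2 → W) =
    ![Q ![v (σ 0), v (σ 1)], v (σ 2)] := by
  funext i
  fin_cases i
  · show Q _ = Q _
    congr 1
    funext j
    fin_cases j <;> rfl
  · rfl

lemma circ11 {W : Type*} [AddCommGroup W] (P Q : (Fin 2 → W) → W) (v : Fin 3 → W) :
    nrCirc 1 1 P Q v =
      P ![Q ![v 0, v 1], v 2] - P ![Q ![v 0, v 2], v 1] + P ![Q ![v 1, v 2], v 0] := by
  show (∑ σ : Equiv.Perm (Fin 3), _) = _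
  rw [univ3]
  rw [Finset.sum_insert (by decide), Finset.sum_insert (by decide),
    Finset.sum_insert (by decide), Finset.sum_insert (by decide),
    Finset.sum_insert (by decide), Finset.sum_singleton]
  rw [if_pos sh_id, if_pos sh_s12, if_pos sh_c4, if_neg nsh_s01, if_neg nsh_s02, if_neg nsh_c5]
  rw [arg11, arg11, arg11]
  have e1 : ∀ i : Fin 3, (1 : Equiv.Perm (Fin 3)) i = i := fun i => rfl
  have s0 : Equiv.swap (1:Fin 3) 2 0 = 0 := by decide
  have s1 : Equiv.swap (1:Fin 3) 2 1 = 2 := by decide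
  have s2 : Equiv.swap (1:Fin 3) 2 2 = 1 := by decide
  have c0 : c4 0 = 1 := by decide
  have c1 : c4 1 = 2 := by decide
  have c2 : c4 2 = 0 := by decide
  rw [e1, e1, e1, s0, s1, s2, c0, c1, c2, Equiv.Perm.sign_one,
    Equiv.Perm.sign_swap (by decide), show Equiv.Perm.sign c4 = 1 by decide]
  push_cast
  simp only [one_smul, neg_smul]
  abel

lemma univ2 : (Finset.univ : Finset (Equiv.Perm (Fin 2))) = {1, Equiv.swap 0 1} := by decide

lemma sh2_all (σ : Equiv.Perm (Fin 2)) : IsShuffle 1 σ := by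
  intro a b hab h
  exfalso
  have hab' : (a : ℕ) < (b : ℕ) := hab
  rcases h with h | h <;> omega

lemma sh2_id : IsShuffle (n := 2) 2 1 := by
  intro a b hab h; revert hab h; fin_cases a <;> fin_cases b <;> decide

lemma nsh2_swap : ¬ IsShuffle 2 (Equiv.swap (0:Fin 2) 1) :=
  fun h => by have := h 0 1 (by decide) (Or.inl (by decide)); revert this; decide

lemma arg10 {W : Type*} (Q : (Fin 1 → W) → W) (v : Fin 2 → W)
    (σ : Equiv.Perm (Fin 2)) (h : 0+1 ≤ 1+0+1) (h' : 0+1+1 = 1+0+1) :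
    (Fin.cons (Q fun i => v (σ (Fin.castLE h i)))
        (fun i => v (σ (Fin.cast h' (Fin.natAdd (0+1) i)))) : Fin 2 → W) =
    ![Q ![v (σ 0)], v (σ 1)] := by
  funext i
  fin_cases i
  · show Q _ = Q _
    congr 1
    funext j
    fin_cases j <;> rfl
  · rfl

lemma arg01 {W : Type*} (P : (Fin 2 → W) → W) (v : Fin 2 → W)
    (σ : Equiv.Perm (Fin 2)) (h : 1+1 ≤ 0+1+1) (h' : 1+1+0 = 0+1+1) :
    (Fin.cons (P fun i => v (σ (Fin.castLE h i)))
        (fun i => v (σ (Fin.cast h' (Fin.natAdd (1+1) i)))) : Fin 1 → W) =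
    ![P ![v (σ 0), v (σ 1)]] := by
  funext i
  fin_cases i
  show P _ = P _
  congr 1
  funext j
  fin_cases j <;> rfl

lemma circ10 {W : Type*} [AddCommGroup W] (P : (Fin 2 → W) → W) (Q : (Fin 1 → W) → W)
    (v : Fin 2 → W) :
    nrCirc 1 0 P Q v = P ![Q ![v 0], v 1] - P ![Q ![v 1], v 0] := by
  show (∑ σ : Equiv.Perm (Fin 2), _) = _
  rw [univ2, Finset.sum_insert (by decide), Finset.sum_singleton]
  rw [if_pos (sh2_all 1), if_pos (sh2_all _), arg10, arg10]
  have e1 : ∀ i : Fin 2, (1 : Equiv.Perm (Fin 2)) i = i := fun i => rfl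
  have s0 : Equiv.swap (0:Fin 2) 1 0 = 1 := by decide
  have s1 : Equiv.swap (0:Fin 2) 1 1 = 0 := by decide
  rw [e1, e1, s0, s1, Equiv.Perm.sign_one, Equiv.Perm.sign_swap (by decide)]
  push_cast
  simp only [one_smul, neg_smul]
  abel

lemma circ01 {W : Type*} [AddCommGroup W] (Q : (Fin 1 → W) → W) (P : (Fin 2 → W) → W)
    (v : Fin 2 → W) :
    nrCirc 0 1 Q P v = Q ![P ![v 0, v 1]] := by
  show (∑ σ : Equiv.Perm (Fin 2), _) = _
  rw [univ2, Finset.sum_insert (by decide), Finset.sum_singleton]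
  rw [if_pos sh2_id, if_neg nsh2_swap, arg01]
  have e1 : ∀ i : Fin 2, (1 : Equiv.Perm (Fin 2)) i = i := fun i => rfl
  rw [e1, e1, Equiv.Perm.sign_one]
  push_cast
  simp only [one_smul]
  abel

lemma brk11 {W : Type*} [AddCommGroup W] (P : (Fin 2 → W) → W) (v : Fin 3 → W) :
    nrBracket 1 1 P P v = (2:ℤ) •
      (P ![P ![v 0, v 1], v 2] - P ![P ![v 0, v 2], v 1] + P ![P ![v 1, v 2], v 0]) := by
  show nrCirc 1 1 P P v - ((-1:ℤ)^(1*1)) • nrCirc 1 1 P P v = _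
  rw [circ11]
  norm_num
  abel

lemma brk10 {W : Type*} [AddCommGroup W] (P : (Fin 2 → W) → W) (Q : (Fin 1 → W) → W)
    (v : Fin 2 → W) :
    nrBracket 1 0 P Q v = P ![Q ![v 0], v 1] - P ![Q ![v 1], v 0] - Q ![P ![v 0, v 1]] := by
  show nrCirc 1 0 P Q v - ((-1:ℤ)^(1*0)) • nrCirc 0 1 Q P v = _
  rw [circ10, circ01]
  norm_num

lemma half {K M : Type*} [Field K] [CharZero K] [AddCommGroup M] [Module K M] {x : M}
    (h : (2:ℤ) • x = 0) : x = 0 := by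
  have h2 : ((2:ℤ):K) • x = 0 := by rw [Int.cast_smul_eq_zsmul]; exact h
  simpa using (smul_eq_zero.mp h2).resolve_left (by norm_num)


/-- `((g,μ),ρ,T)` is a relative Rota-Baxter Lie algebra iff
`(s⁻¹π, T)` (with `π = μ+ρ`) is a Maurer-Cartan element of the `L∞`-algebra
`s⁻¹L' ⊕ h`, which by the computation of the Maurer-Cartan equation is equivalent to
`[π,π]_NR = 0` and `[[π,T]_NR,T]_NR = 0`. -/
theorem stmt8 {K g V : Type*} [Field K] [CharZero K] [AddCommGroup g] [Module K g]
    [AddCommGroup V] [Module K V]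
    (μ : g →ₗ[K] g →ₗ[K] g) (hskew : ∀ x y, μ x y = - μ y x)
    (ρ : g →ₗ[K] Module.End K V) (T : V →ₗ[K] g) :
    ((∀ x y z, μ (μ x y) z + μ (μ y z) x + μ (μ z x) y = 0) ∧
     (∀ x y, ρ (μ x y) = ρ x * ρ y - ρ y * ρ x) ∧
     (∀ u v, μ (T u) (T v) = T (ρ (T u) v - ρ (T v) u))) ↔
    (nrBracket 1 1 (pihat μ ρ) (pihat μ ρ) = 0 ∧
     nrBracket 1 0 (nrBracket 1 0 (pihat μ ρ) (hatT T)) (hatT T) = 0) := by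
  constructor
  · rintro ⟨hjac, hrep, hrb⟩
    constructor
    · funext v
      rw [brk11]
      have key : (pihat μ ρ ![pihat μ ρ ![v 0, v 1], v 2] -
          pihat μ ρ ![pihat μ ρ ![v 0, v 2], v 1] +
          pihat μ ρ ![pihat μ ρ ![v 1, v 2], v 0]) = 0 := by
        simp only [Matrix.cons_val_two, Matrix.tail_cons, Prod.mk_sub_mk, Prod.mk_add_mk, pihat, Matrix.cons_val_zero, Matrix.cons_val_one, Matrix.head_cons,
          Prod.mk_sub_mk, Prod.mk_add_mk, Prod.ext_iff, Prod.fst_zero, Prod.snd_zero]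
        constructor
        · have h1 := hjac (v 0).1 (v 1).1 (v 2).1
          rw [hskew (v 2).1 (v 0).1, map_neg, LinearMap.neg_apply] at h1
          abel_nf at h1 ⊢
          exact h1
        · simp only [hrep, LinearMap.sub_apply, Module.End.mul_apply, map_sub]
          abel
      rw [key, smul_zero]
      rfl
    · funext v
      simp only [brk10]
      simp only [Matrix.cons_val_two, Matrix.tail_cons, Prod.mk_sub_mk, Prod.mk_add_mk, pihat, hatT, Matrix.cons_val_zero, Matrix.cons_val_one, Matrix.head_cons,
        map_zero, map_sub, Prod.fst, Prod.snd, LinearMap.zero_apply, Prod.mk_sub_mk,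
        Prod.ext_iff, Prod.fst_zero, Prod.snd_zero, Pi.zero_apply]
      refine ⟨?_, by abel⟩
      rw [hskew (T ((v 1).2)) (T ((v 0).2))]
      have hr := hrb (v 0).2 (v 1).2
      rw [map_sub] at hr
      rw [hr]
      abel
  · rintro ⟨h1, h2⟩
    refine ⟨?_, ?_, ?_⟩
    · intro x y z
      have h := congrFun h1 (![(x,0),(y,0),(z,0)] : Fin 3 → g × V)
      rw [brk11] at h
      have h' := congrArg Prod.fst (half (K := K) (by rw [h]; rfl))
      simp only [Matrix.cons_val_two, Matrix.tail_cons, Prod.mk_sub_mk, Prod.mk_add_mk, pihat, Matrix.cons_val_zero, Matrix.cons_val_one, Matrix.head_cons,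
        Prod.fst_add, Prod.fst_sub, Prod.fst_zero, map_zero, LinearMap.zero_apply,
        Prod.snd] at h'
      rw [hskew z x, map_neg, LinearMap.neg_apply]
      refine Eq.trans ?_ h'
      abel
    · intro x y
      apply LinearMap.ext
      intro w
      have h := congrFun h1 (![(x,0),(y,0),((0:g),w)] : Fin 3 → g × V)
      rw [brk11] at h
      have h' := congrArg Prod.snd (half (K := K) (by rw [h]; rfl))
      simp only [Matrix.cons_val_two, Matrix.tail_cons, Prod.mk_sub_mk, Prod.mk_add_mk, pihat, Matrix.cons_val_zero, Matrix.cons_val_one, Matrix.head_cons,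
        Prod.snd_add, Prod.snd_sub, Prod.snd_zero, map_zero, LinearMap.zero_apply,
        Prod.fst, zero_sub, sub_zero, neg_neg] at h'
      simp only [LinearMap.sub_apply, Module.End.mul_apply]
      rw [← sub_eq_zero]
      refine Eq.trans ?_ h'
      abel
    · intro u w
      have h := congrFun h2 (![((0:g),u),((0:g),w)] : Fin 2 → g × V)
      simp only [brk10] at h
      have h' := congrArg Prod.fst h
      simp only [Matrix.cons_val_two, Matrix.tail_cons, Prod.mk_sub_mk, Prod.mk_add_mk, pihat, hatT, Matrix.cons_val_zero, Matrix.cons_val_one, Matrix.head_cons,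
        Prod.fst_add, Prod.fst_sub, Prod.fst_zero, map_zero, map_sub, LinearMap.zero_apply,
        Prod.fst, Prod.snd, Pi.zero_apply, zero_sub, sub_zero] at h'
      rw [hskew (T w) (T u)] at h'
      have h2 : (2:ℤ) • (μ (T u) (T w) - T ((ρ (T u)) w) + T ((ρ (T w)) u)) = 0 := by
        rw [← h']
        abel
      have h3 := half (K := K) h2
      rw [map_sub, ← sub_eq_zero]
      refine Eq.trans ?_ h3
      abel
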